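/- Under the standing assumptions (bounded F continuous in each variable, a common minimizing set 𝒜 with argmin_z F(z,μ) = 𝒜 for every μ, the lower bound F(z,μ) − c(μ) ≥ γ(r) whenever dist(z,𝒜) > r, and equilibria (m^T, Φ^T) for each T > 1 with uniformly χ'-Lipschitz optimal trajectories), for every s₀ ∈ (0,1]: lim_{T→∞} sup_{s ∈ [s₀,1]} sup_{x ∈ supp(m^T(sT))} dist(x, 𝒜) = 0, and dist(Φ^T(x, sT), 𝒜) → 0 as T → ∞ uniformly for x ∈ K₀ and s ∈ [s₀,1]. -/

import Mathlib

/-!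
Compare an optimal trajectory `φ` with the competitor that follows `φ` up to time `t`, moves
straight to a point `b ∈ 𝒜` during a time `τ` and then rests at `b`: since `b` minimises
`F(·, μ)` for every `μ`, this bounds the excess cost `∫ₜᵀ (F(φ, m) - min F(·, m))` by
`|φ(t) - b|² / (2τ) + 2Mτ`. For `t = 0` the bound does not depend on `T`, so the trajectory
comes `r`-close to `𝒜` before time `s₀T/2`, after which only `O(r)` excess cost is left. An
excursion to distance `ε` at a time `sT` would, by the uniform Lipschitz bound, keep the
trajectory `ε/2`-away from `𝒜` during a time of order `ε`, and so cost at least a fixed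
multiple of `γ(ε/2)`. The support of `m^T(sT)` lies in the closure of the endpoints of these
trajectories.
-/

open MeasureTheory Set Filter Metric

noncomputable section

abbrev En (n : ℕ) : Type := EuclideanSpace ℝ (Fin n)
abbrev Pn (n : ℕ) : Type := MeasureTheory.ProbabilityMeasure (En n)

/-- Support of a probability measure. -/
def msupp {n : ℕ} (μ : Pn n) : Set (En n) := {x | ∀ U ∈ nhds x, μ.toMeasure U ≠ 0}

/-- Action functional on the time interval `[t,T]`. -/
def action {n : ℕ} (F : En n → Pn n → ℝ) (m : ℝ → Pn n) (t T : ℝ) (y : ℝ → En n) : ℝ :=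
  ∫ s in t..T, (‖deriv y s‖ ^ 2 / 2 + F (y s) (m s))

/-- Admissible curves on `[t,T]` starting at `x`. -/
def Adm {n : ℕ} (t T : ℝ) (x : En n) (y : ℝ → En n) : Prop :=
  (∃ L : NNReal, LipschitzOnWith L y (Set.Icc t T)) ∧ y t = x

/-- `cmin F μ` is the infimum of `F (·, μ)`. -/
def cmin {n : ℕ} (F : En n → Pn n → ℝ) (μ : Pn n) : ℝ := ⨅ z : En n, F z μ

/-- A Lagrangian equilibrium of the finite-horizon mean field game. -/
def IsEquilibrium {n : ℕ} (F : En n → Pn n → ℝ) (K₀ : Set (En n)) (m₀ : Pn n) (T : ℝ)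
    (m : ℝ → Pn n) (Φ : En n → ℝ → En n) : Prop :=
  ContinuousOn m (Set.Icc 0 T) ∧
  (∀ x ∈ K₀, Adm 0 T x (Φ x) ∧
    ∀ y : ℝ → En n, Adm 0 T x y → action F m 0 T (Φ x) ≤ action F m 0 T y) ∧
  (∀ s ∈ Set.Icc (0:ℝ) T,
    (m s : Measure (En n)) = Measure.map (fun x => Φ x s) (m₀ : Measure (En n)))

open Topology
open scoped NNReal

section Measurability

variable {X Y : Type*} [TopologicalSpace X] [TopologicalSpace.MetrizableSpace X]
  [SecondCountableTopology X] [MeasurableSpace X] [BorelSpace X] [TopologicalSpace Y]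

lemma aemeasurable_comp_of_separatelyContinuous {G : X → Y → ℝ}
    (hGx : ∀ q, Continuous (G · q)) (hGy : ∀ p, Continuous (G p)) {s : Set ℝ}
    (hs : MeasurableSet s) {y : ℝ → X} {w : ℝ → Y} (hy : ContinuousOn y s)
    (hw : ContinuousOn w s) : AEMeasurable (fun u => G (y u) (w u)) (volume.restrict s) := by
  borelize Y
  have hG : Measurable (Function.uncurry G) :=
    measurable_uncurry_of_continuous_of_measurable hGx fun p => (hGy p).measurable
  exact hG.comp_aemeasurable ((hy.aemeasurable hs).prodMk (hw.aemeasurable hs))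

lemma intervalIntegrable_comp_of_separatelyContinuous {G : X → Y → ℝ} {M : ℝ}
    (hM : ∀ p q, |G p q| ≤ M) (hGx : ∀ q, Continuous (G · q)) (hGy : ∀ p, Continuous (G p))
    {a b : ℝ} (hab : a ≤ b) {y : ℝ → X} {w : ℝ → Y} (hy : ContinuousOn y (Icc a b))
    (hw : ContinuousOn w (Icc a b)) :
    IntervalIntegrable (fun u => G (y u) (w u)) volume a b := by
  rw [intervalIntegrable_iff_integrableOn_Icc_of_le hab]
  exact IntegrableOn.of_bound measure_Icc_lt_top
    (aemeasurable_comp_of_separatelyContinuous hGx hGy measurableSet_Icc hy hw).aestronglyMeasurable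
    M (ae_of_all _ fun u => hM _ _)

end Measurability

lemma intervalIntegrable_norm_deriv_sq {E : Type*} [NormedAddCommGroup E] [NormedSpace ℝ E]
    [CompleteSpace E] {y : ℝ → E} {K : ℝ≥0} {a b : ℝ} (hab : a ≤ b)
    (hy : LipschitzOnWith K y (Icc a b)) :
    IntervalIntegrable (fun u => ‖deriv y u‖ ^ 2) volume a b := by
  rw [intervalIntegrable_iff_integrableOn_Ioo_of_le hab]
  refine IntegrableOn.of_bound measure_Ioo_lt_top
    ((stronglyMeasurable_deriv y).norm.pow 2).aestronglyMeasurable (K ^ 2) ?_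
  refine ae_restrict_of_forall_mem measurableSet_Ioo fun u hu => ?_
  have hK : ‖deriv y u‖ ≤ K := norm_deriv_le_of_lipschitzOn (Icc_mem_nhds hu.1 hu.2) hy
  rw [norm_pow, norm_norm]
  gcongr

section Divert

variable {E : Type*} [NormedAddCommGroup E] [NormedSpace ℝ E]

lemma lipschitzWith_ramp {t τ : ℝ} (hτ : 0 < τ) (v : E) :
    LipschitzWith (‖v‖₊ / τ.toNNReal)
      (fun u => (projIcc 0 1 zero_le_one ((u - t) / τ) : ℝ) • v) := by
  refine LipschitzWith.of_dist_le_mul fun u u' => ?_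
  set c : ℝ → ℝ := fun u => projIcc 0 1 zero_le_one ((u - t) / τ)
  have hc : |c u - c u'| ≤ dist u u' / τ := by
    have := (LipschitzWith.projIcc (zero_le_one' ℝ)).dist_le_mul ((u - t) / τ) ((u' - t) / τ)
    rw [Subtype.dist_eq, NNReal.coe_one, one_mul, Real.dist_eq, Real.dist_eq, ← sub_div,
      abs_div, abs_of_pos hτ, sub_sub_sub_cancel_right] at this
    rwa [Real.dist_eq]
  calc dist (c u • v) (c u' • v) = |c u - c u'| * ‖v‖ := by
        rw [dist_eq_norm, ← sub_smul, norm_smul, Real.norm_eq_abs]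
    _ ≤ dist u u' / τ * ‖v‖ := by gcongr
    _ = _ := by
        rw [NNReal.coe_div, coe_nnnorm, Real.coe_toNNReal _ hτ.le]
        ring

/-- Follow `φ` up to time `t`, then move at constant speed to `b`, reached at time `t + τ`. -/
def divert (φ : ℝ → E) (t τ : ℝ) (b : E) (u : ℝ) : E :=
  φ (min u t) + (projIcc 0 1 zero_le_one ((u - t) / τ) : ℝ) • (b - φ t)

variable {φ : ℝ → E} {t τ : ℝ} {b : E} {u : ℝ}

lemma divert_of_le (hτ : 0 ≤ τ) (hu : u ≤ t) : divert φ t τ b u = φ u := by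
  have : (u - t) / τ ≤ 0 := div_nonpos_of_nonpos_of_nonneg (by linarith) hτ
  simp [divert, min_eq_left hu, projIcc_of_le_left _ this]

lemma divert_of_ge (hτ : 0 < τ) (hu : t + τ ≤ u) : divert φ t τ b u = b := by
  have : 1 ≤ (u - t) / τ := (one_le_div hτ).2 (by linarith)
  simp [divert, min_eq_right (by linarith : t ≤ u), projIcc_of_right_le _ this]

lemma lipschitzOnWith_divert {K : ℝ≥0} {a T : ℝ} (hφ : LipschitzOnWith K φ (Icc a T))
    (ht : t ∈ Icc a T) (hτ : 0 < τ) :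
    LipschitzOnWith (K + ‖b - φ t‖₊ / τ.toNNReal) (divert φ t τ b) (Icc a T) := by
  have hmin : LipschitzOnWith K (fun u => φ (min u t)) (Icc a T) := by
    have := hφ.comp ((LipschitzWith.id.min_const t).lipschitzOnWith (s := Icc a T))
      fun u hu => ⟨le_min hu.1 ht.1, (min_le_right u t).trans ht.2⟩
    simpa [Function.comp_def] using this
  exact hmin.add (lipschitzWith_ramp hτ (b - φ t)).lipschitzOnWith

lemma deriv_divert_of_lt (hτ : 0 ≤ τ) (hu : u < t) :
    deriv (divert φ t τ b) u = deriv φ u :=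
  Filter.EventuallyEq.deriv_eq <| eventually_of_mem (Iio_mem_nhds hu) fun _ hv =>
    divert_of_le hτ (le_of_lt hv)

lemma norm_deriv_divert_le (hτ : 0 < τ) (hu : t < u) :
    ‖deriv (divert φ t τ b) u‖ ≤ dist (φ t) b / τ := by
  have hev : divert φ t τ b =ᶠ[𝓝 u]
      fun v => φ t + (projIcc 0 1 zero_le_one ((v - t) / τ) : ℝ) • (b - φ t) :=
    eventually_of_mem (Ioi_mem_nhds hu) fun v hv => by
      simp only [divert, min_eq_right (le_of_lt (mem_Ioi.1 hv))]
  rw [hev.deriv_eq, deriv_const_add]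
  refine (norm_deriv_le_of_lipschitz (lipschitzWith_ramp hτ (b - φ t))).trans_eq ?_
  rw [NNReal.coe_div, coe_nnnorm, Real.coe_toNNReal _ hτ.le, dist_eq_norm']

lemma deriv_divert_of_gt (hτ : 0 < τ) (hu : t + τ < u) : deriv (divert φ t τ b) u = 0 := by
  have hev : divert φ t τ b =ᶠ[𝓝 u] fun _ => b :=
    eventually_of_mem (Ioi_mem_nhds hu) fun _ hv => divert_of_ge hτ (le_of_lt hv)
  rw [hev.deriv_eq, deriv_const]

end Divert

lemma integral_tail_le_of_integral_le {f g : ℝ → ℝ} {a t b : ℝ}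
    (hf : IntervalIntegrable f volume a b) (hg : IntervalIntegrable g volume a b)
    (ht : t ∈ Icc a b) (hle : ∫ u in a..b, f u ≤ ∫ u in a..b, g u) (heq : EqOn f g (Iio t)) :
    ∫ u in t..b, f u ≤ ∫ u in t..b, g u := by
  have hhead : ∫ u in a..t, f u = ∫ u in a..t, g u :=
    intervalIntegral.integral_congr_Ioo_of_le ht.1 fun u hu => heq hu.2
  have hleft : uIcc a t ⊆ uIcc a b := uIcc_subset_uIcc_left (mem_uIcc_of_le ht.1 ht.2)
  have hright : uIcc t b ⊆ uIcc a b := uIcc_subset_uIcc_right (mem_uIcc_of_le ht.1 ht.2)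
  rw [← intervalIntegral.integral_add_adjacent_intervals (hf.mono_set hleft) (hf.mono_set hright),
    ← intervalIntegral.integral_add_adjacent_intervals (hg.mono_set hleft) (hg.mono_set hright),
    hhead] at hle
  linarith

def lagrangian {n : ℕ} (F : En n → Pn n → ℝ) (m : ℝ → Pn n) (y : ℝ → En n) (s : ℝ) : ℝ :=
  ‖deriv y s‖ ^ 2 / 2 + F (y s) (m s)

section Energy

variable {n : ℕ} {F : En n → Pn n → ℝ} {M : ℝ} {m : ℝ → Pn n}

lemma intervalIntegrable_lagrangian (hM : ∀ x μ, |F x μ| ≤ M)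
    (hFx : ∀ μ, Continuous fun x => F x μ) (hFm : ∀ x, Continuous fun μ => F x μ)
    {y : ℝ → En n} {K : ℝ≥0} {a b : ℝ} (hab : a ≤ b) (hy : LipschitzOnWith K y (Icc a b))
    (hm : ContinuousOn m (Icc a b)) : IntervalIntegrable (lagrangian F m y) volume a b :=
  ((intervalIntegrable_norm_deriv_sq hab hy).div_const 2).add
    (intervalIntegrable_comp_of_separatelyContinuous hM hFx hFm hab hy.continuousOn hm)

lemma integral_lagrangian_divert_sub_le (hM : ∀ x μ, |F x μ| ≤ M) {φ : ℝ → En n}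
    {t τ T : ℝ} {a b : En n} (hba : ∀ μ, F b μ ≤ F a μ) (hτ : 0 < τ) (htτ : t + τ ≤ T)
    (hint : IntervalIntegrable (fun u => lagrangian F m (divert φ t τ b) u - F a (m u))
      volume t T) :
    ∫ u in t..T, (lagrangian F m (divert φ t τ b) u - F a (m u)) ≤
      dist (φ t) b ^ 2 / (2 * τ) + 2 * M * τ := by
  have hmid : t + τ ∈ uIcc t T := mem_uIcc_of_le (by linarith) htτ
  rw [← intervalIntegral.integral_add_adjacent_intervals
    (hint.mono_set (uIcc_subset_uIcc_left hmid)) (hint.mono_set (uIcc_subset_uIcc_right hmid))]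
  have hmove : ∫ u in t..t + τ, (lagrangian F m (divert φ t τ b) u - F a (m u)) ≤
      ∫ _ in t..t + τ, ((dist (φ t) b / τ) ^ 2 / 2 + 2 * M) := by
    refine intervalIntegral.integral_mono_on_of_le_Ioo (by linarith)
      (hint.mono_set (uIcc_subset_uIcc_left hmid)) intervalIntegrable_const fun u hu => ?_
    have hv := norm_deriv_divert_le (φ := φ) (b := b) hτ hu.1
    have hF := abs_le.1 (hM (divert φ t τ b u) (m u))
    have hFa := abs_le.1 (hM a (m u))
    simp only [lagrangian]
    nlinarith [norm_nonneg (deriv (divert φ t τ b) u)]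
  have hstay : ∫ u in t + τ..T, (lagrangian F m (divert φ t τ b) u - F a (m u)) ≤
      ∫ _ in t + τ..T, (0 : ℝ) := by
    refine intervalIntegral.integral_mono_on_of_le_Ioo htτ
      (hint.mono_set (uIcc_subset_uIcc_right hmid)) intervalIntegrable_const fun u hu => ?_
    simp only [lagrangian, deriv_divert_of_gt hτ hu.1, divert_of_ge hτ (le_of_lt hu.1)]
    simpa using hba (m u)
  have hcost : ∫ _ in t..t + τ, ((dist (φ t) b / τ) ^ 2 / 2 + 2 * M) =
      dist (φ t) b ^ 2 / (2 * τ) + 2 * M * τ := by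
    rw [intervalIntegral.integral_const, smul_eq_mul, add_sub_cancel_left]
    field_simp
  rw [intervalIntegral.integral_zero] at hstay
  linarith

lemma integral_sub_le_of_forall_action_le (hM : ∀ x μ, |F x μ| ≤ M)
    (hFx : ∀ μ, Continuous fun x => F x μ) (hFm : ∀ x, Continuous fun μ => F x μ)
    {φ : ℝ → En n} {K : ℝ≥0} {T t τ : ℝ} {a b : En n} (hm : ContinuousOn m (Icc 0 T))
    (hφ : LipschitzOnWith K φ (Icc 0 T))
    (hopt : ∀ y, Adm 0 T (φ 0) y → action F m 0 T φ ≤ action F m 0 T y)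
    (hba : ∀ μ, F b μ ≤ F a μ) (ht : t ∈ Icc 0 T) (hτ : 0 < τ) (htτ : t + τ ≤ T) :
    ∫ u in t..T, (F (φ u) (m u) - F a (m u)) ≤ dist (φ t) b ^ 2 / (2 * τ) + 2 * M * τ := by
  have hT : 0 ≤ T := ht.1.trans ht.2
  have hsub : uIcc t T ⊆ uIcc 0 T := uIcc_subset_uIcc_right (mem_uIcc_of_le ht.1 ht.2)
  set y := divert φ t τ b
  have hy := lipschitzOnWith_divert (b := b) hφ ht hτ
  have hIφ := intervalIntegrable_lagrangian hM hFx hFm hT hφ hm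
  have hIy := intervalIntegrable_lagrangian hM hFx hFm hT hy hm
  have hIa : IntervalIntegrable (fun u => F a (m u)) volume 0 T :=
    ((hFm a).comp_continuousOn hm).intervalIntegrable_of_Icc hT
  have htail : ∫ u in t..T, lagrangian F m φ u ≤ ∫ u in t..T, lagrangian F m y u :=
    integral_tail_le_of_integral_le hIφ hIy ht (hopt y ⟨⟨_, hy⟩, divert_of_le hτ.le ht.1⟩)
      fun u hu => by
        simp only [lagrangian, y, divert_of_le hτ.le (le_of_lt hu), deriv_divert_of_lt hτ.le hu]
  calc ∫ u in t..T, (F (φ u) (m u) - F a (m u))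
      ≤ ∫ u in t..T, (lagrangian F m φ u - F a (m u)) :=
        intervalIntegral.integral_mono_on ht.2
          (((intervalIntegrable_comp_of_separatelyContinuous hM hFx hFm hT hφ.continuousOn
            hm).sub hIa).mono_set hsub) ((hIφ.sub hIa).mono_set hsub) fun u _ => by
          simp only [lagrangian]; linarith [sq_nonneg ‖deriv φ u‖]
    _ ≤ ∫ u in t..T, (lagrangian F m y u - F a (m u)) := by
        rw [intervalIntegral.integral_sub (hIφ.mono_set hsub) (hIa.mono_set hsub),
          intervalIntegral.integral_sub (hIy.mono_set hsub) (hIa.mono_set hsub)]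
        linarith
    _ ≤ _ := integral_lagrangian_divert_sub_le hM hba hτ htτ ((hIy.sub hIa).mono_set hsub)

end Energy

section Turnpike

variable {g e : ℝ → ℝ}

/-- On its way from below `ε / 2` to above `ε`, the `L`-Lipschitz function `g` spends a time at
least `ε / (2 * (L + 1))` above `ε / 2`, where `e ≥ κ`. -/
lemma le_integral_of_lipschitzOnWith {L : ℝ≥0} {t u ε κ : ℝ} (hε : 0 < ε) (htu : t ≤ u)
    (hg : LipschitzOnWith L g (Icc t u)) (hgt : g t ≤ ε / 2) (hgu : ε < g u)
    (he : ∀ v ∈ Icc t u, ε / 2 < g v → κ ≤ e v) (he0 : ∀ v ∈ Icc t u, 0 ≤ e v)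
    (hint : IntervalIntegrable e volume t u) :
    κ * (ε / (2 * (L + 1))) ≤ ∫ v in t..u, e v := by
  set δ := ε / (2 * (L + 1))
  have hδ : 0 < δ := by positivity
  have hLδ : L * δ < ε / 2 := by
    rw [mul_div_assoc', div_lt_div_iff₀ (by positivity) two_pos]
    nlinarith
  have hfar : ∀ v ∈ Icc t u, u - δ ≤ v → ε / 2 < g v := by
    intro v hv hvu
    have hd := hg.dist_le_mul u ⟨htu, le_rfl⟩ v hv
    rw [Real.dist_eq, Real.dist_eq, abs_of_nonneg (sub_nonneg.2 hv.2)] at hd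
    have : (L : ℝ) * (u - v) ≤ L * δ := mul_le_mul_of_nonneg_left (by linarith) L.2
    linarith [le_abs_self (g u - g v)]
  have htδ : t ≤ u - δ := by
    by_contra! h
    exact (hfar t ⟨le_rfl, htu⟩ h.le).not_ge hgt
  calc κ * δ = ∫ _ in u - δ..u, κ := by simp [mul_comm]
    _ ≤ ∫ v in u - δ..u, e v :=
        intervalIntegral.integral_mono_on (by linarith) intervalIntegrable_const
          (hint.mono_set (uIcc_subset_uIcc_right (mem_uIcc_of_le htδ (by linarith))))
          fun v hv => he v ⟨htδ.trans hv.1, hv.2⟩ (hfar v ⟨htδ.trans hv.1, hv.2⟩ hv.1)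
    _ ≤ ∫ v in t..u, e v :=
        intervalIntegral.integral_mono_interval htδ (by linarith) le_rfl
          (ae_restrict_of_forall_mem measurableSet_Ioc fun v hv => he0 v (Ioc_subset_Icc_self hv))
          hint

variable {E : Type*} [PseudoMetricSpace E] {𝒜 : Set E} {φ : ℝ → E} {γ : ℝ → ℝ} {T : ℝ}

lemma exists_infDist_le_of_integral_lt {σ r : ℝ} (hσ : 0 ≤ σ) (hσT : σ ≤ T)
    (hint : IntervalIntegrable e volume 0 T) (he0 : ∀ u ∈ Icc 0 T, 0 ≤ e u)
    (hγe : ∀ u ∈ Icc 0 T, ∀ r, 0 < r → r < infDist (φ u) 𝒜 → γ r ≤ e u) (hr : 0 < r)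
    (hlt : ∫ u in 0..T, e u < γ r * σ) : ∃ t ∈ Icc 0 σ, infDist (φ t) 𝒜 ≤ r := by
  by_contra! hfar
  have hlow : γ r * σ ≤ ∫ u in 0..σ, e u := by
    simpa [mul_comm] using intervalIntegral.integral_mono_on hσ intervalIntegrable_const
      (hint.mono_set (uIcc_subset_uIcc_left (mem_uIcc_of_le hσ hσT)))
      fun v hv => hγe v ⟨hv.1, hv.2.trans hσT⟩ r hr (hfar v hv)
  have hmono : ∫ u in 0..σ, e u ≤ ∫ u in 0..T, e u :=
    intervalIntegral.integral_mono_interval le_rfl hσ hσT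
      (ae_restrict_of_forall_mem measurableSet_Ioc fun v hv => he0 v (Ioc_subset_Icc_self hv)) hint
  linarith

lemma infDist_le_of_integral_lt {L : ℝ≥0} {t u ε : ℝ} (hφ : LipschitzOnWith L φ (Icc 0 T))
    (hint : IntervalIntegrable e volume 0 T) (he0 : ∀ u ∈ Icc 0 T, 0 ≤ e u)
    (hγe : ∀ u ∈ Icc 0 T, ∀ r, 0 < r → r < infDist (φ u) 𝒜 → γ r ≤ e u) (hε : 0 < ε)
    (ht : 0 ≤ t) (htu : t ≤ u) (huT : u ≤ T) (htε : infDist (φ t) 𝒜 ≤ ε / 2)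
    (hlt : ∫ v in t..T, e v < γ (ε / 2) * (ε / (2 * (L + 1)))) : infDist (φ u) 𝒜 ≤ ε := by
  by_contra! hfar
  have hsub : Icc t u ⊆ Icc 0 T := Icc_subset_Icc ht huT
  have hg : LipschitzOnWith L (fun v => infDist (φ v) 𝒜) (Icc t u) := by
    simpa [Function.comp_def] using
      ((lipschitz_infDist_pt 𝒜).comp_lipschitzOnWith hφ).mono hsub
  have hexc := le_integral_of_lipschitzOnWith hε htu hg htε hfar
    (fun v hv => hγe v (hsub hv) (ε / 2) (by positivity)) (fun v hv => he0 v (hsub hv))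
    (hint.mono_set (uIcc_subset_uIcc (mem_uIcc_of_le ht (htu.trans huT))
      (mem_uIcc_of_le (ht.trans htu) huT)))
  have hmono : ∫ v in t..u, e v ≤ ∫ v in t..T, e v :=
    intervalIntegral.integral_mono_interval le_rfl htu huT
      (ae_restrict_of_forall_mem measurableSet_Ioc fun v hv => he0 v ⟨ht.trans hv.1.le, hv.2⟩)
      (hint.mono_set (uIcc_subset_uIcc_right (mem_uIcc_of_le ht (htu.trans huT))))
  linarith

theorem eventually_infDist_le_of_energy_bound (h𝒜 : 𝒜.Nonempty)
    (hγ_pos : ∀ r, 0 < r → 0 < γ r) {M : ℝ} (hM : 0 ≤ M) (R : ℝ) (L : ℝ≥0) {s₀ ε : ℝ}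
    (hs₀ : 0 < s₀) (hε : 0 < ε) :
    ∀ᶠ T in atTop, ∀ (φ : ℝ → E) (e : ℝ → ℝ), LipschitzOnWith L φ (Icc 0 T) →
      infDist (φ 0) 𝒜 < R → IntervalIntegrable e volume 0 T → (∀ u ∈ Icc 0 T, 0 ≤ e u) →
      (∀ u ∈ Icc 0 T, ∀ r, 0 < r → r < infDist (φ u) 𝒜 → γ r ≤ e u) →
      (∀ t ∈ Icc 0 T, ∀ τ, 0 < τ → t + τ ≤ T → ∀ b ∈ 𝒜,
        ∫ u in t..T, e u ≤ dist (φ t) b ^ 2 / (2 * τ) + 2 * M * τ) →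
      ∀ s ∈ Icc s₀ 1, infDist (φ (s * T)) 𝒜 ≤ ε := by
  set c := γ (ε / 2) * (ε / (2 * (L + 1)))
  have hc : 0 < c := mul_pos (hγ_pos _ (by positivity)) (by positivity)
  set r := min (ε / 2) (min 1 (c / (4 * (1 + M))))
  have hr : 0 < r := by positivity
  have hrε : r ≤ ε / 2 := min_le_left _ _
  have hr1 : r ≤ 1 := (min_le_right _ _).trans (min_le_left _ _)
  have hrc : 2 * r * (1 + M) < c := by
    have : r ≤ c / (4 * (1 + M)) := (min_le_right _ _).trans (min_le_right _ _)
    rw [le_div_iff₀ (by positivity)] at this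
    linarith
  filter_upwards [eventually_ge_atTop 2,
    eventually_gt_atTop ((R ^ 2 + 4 * M) / (γ r * s₀))]
    with T hT2 hTR φ e hφ h0 hint he0 hγe henergy s hs
  rw [div_lt_iff₀ (mul_pos (hγ_pos r hr) hs₀)] at hTR
  have hs₀s : s₀ * T ≤ s * T := mul_le_mul_of_nonneg_right hs.1 (by linarith)
  have hsT : s * T ≤ T := mul_le_of_le_one_left (by linarith) hs.2
  have hs₀T : 0 < s₀ * T := by positivity
  obtain ⟨a, ha, h0a⟩ := (infDist_lt_iff h𝒜).1 h0
  have hglobal : ∫ u in 0..T, e u < γ r * (s₀ * T / 2) :=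
    (henergy 0 ⟨le_rfl, by linarith⟩ 1 one_pos (by linarith) a ha).trans_lt
      (by nlinarith [pow_le_pow_left₀ dist_nonneg h0a.le 2])
  obtain ⟨t, ht, htr⟩ := exists_infDist_le_of_integral_lt (by positivity) (by linarith)
    hint he0 hγe hr hglobal
  obtain ⟨b, hb, htb⟩ := (infDist_lt_iff h𝒜).1 (htr.trans_lt (by linarith : r < 2 * r))
  refine infDist_le_of_integral_lt hφ hint he0 hγe hε ht.1 (by linarith [ht.2]) hsT
    (htr.trans hrε) ?_
  calc ∫ u in t..T, e u ≤ dist (φ t) b ^ 2 / (2 * r) + 2 * M * r :=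
        henergy t ⟨ht.1, by linarith [ht.2]⟩ r hr (by linarith [ht.2]) b hb
    _ ≤ 2 * r * (1 + M) := by
        have : dist (φ t) b ^ 2 / (2 * r) ≤ 2 * r := by
          rw [div_le_iff₀ (by positivity)]
          nlinarith [pow_le_pow_left₀ dist_nonneg htb.le 2]
        linarith
    _ < c := hrc

end Turnpike

lemma cmin_eq_of_forall_le {n : ℕ} {F : En n → Pn n → ℝ} {μ : Pn n} {a : En n}
    (ha : ∀ z, F a μ ≤ F z μ) : cmin F μ = F a μ :=
  le_antisymm (ciInf_le ⟨F a μ, forall_mem_range.2 ha⟩ a) (le_ciInf ha)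

lemma msupp_eq_support {n : ℕ} (μ : Pn n) : msupp μ = (μ : Measure (En n)).support := by
  ext x
  simp [msupp, Measure.mem_support_iff_forall, pos_iff_ne_zero]

lemma MeasureTheory.Measure.support_map_subset_closure_image {X Y : Type*} [TopologicalSpace X]
    [HereditarilyLindelofSpace X] [MeasurableSpace X] [TopologicalSpace Y] [MeasurableSpace Y]
    [OpensMeasurableSpace Y] {μ : Measure X} {f : X → Y} (hf : AEMeasurable f μ) :
    (μ.map f).support ⊆ closure (f '' μ.support) := by
  refine fun y hy => mem_closure_iff.2 fun o ho hyo => ?_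
  have hpos : 0 < μ (f ⁻¹' o) := by
    rw [← Measure.map_apply_of_aemeasurable hf ho.measurableSet]
    exact (Measure.mem_support_iff_forall y).1 hy o (ho.mem_nhds hyo)
  obtain ⟨x, hxo, hx⟩ := Measure.nonempty_inter_support_of_pos hpos
  exact ⟨f x, hxo, mem_image_of_mem f hx⟩

lemma infDist_le_of_mem_msupp_of_eq_map {n : ℕ} {μ ν : Pn n} {f : En n → En n}
    (hν : (ν : Measure (En n)) = (μ : Measure (En n)).map f) {K s : Set (En n)}
    (hK : msupp μ ⊆ K) {ε : ℝ} (hf : ∀ x ∈ K, infDist (f x) s ≤ ε) :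
    ∀ y ∈ msupp ν, infDist y s ≤ ε := by
  intro y hy
  have hfm : AEMeasurable f μ := .of_map_ne_zero (hν ▸ IsProbabilityMeasure.ne_zero _)
  rw [msupp_eq_support, hν] at hy
  refine closure_minimal ?_ (isClosed_le (continuous_infDist_pt s) continuous_const)
    (Measure.support_map_subset_closure_image hfm hy)
  rintro _ ⟨x, hx, rfl⟩
  exact hf x (hK (by rwa [msupp_eq_support]))

theorem equilibrium_measures_concentrate_general {n : ℕ} (F : En n → Pn n → ℝ)
    (M : ℝ) (hM : ∀ (x : En n) (μ : Pn n), |F x μ| ≤ M)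
    (hFx : ∀ μ : Pn n, Continuous fun x => F x μ)
    (hFm : ∀ x : En n, Continuous fun μ : Pn n => F x μ)
    (𝒜 : Set (En n)) (hA_ne : 𝒜.Nonempty)
    (hargmin : ∀ μ : Pn n, {z : En n | ∀ w : En n, F z μ ≤ F w μ} = 𝒜)
    (γ : ℝ → ℝ) (hγ_pos : ∀ r : ℝ, 0 < r → 0 < γ r)
    (hγ : ∀ r : ℝ, 0 < r → ∀ (z : En n) (μ : Pn n),
      r < Metric.infDist z 𝒜 → γ r ≤ F z μ - cmin F μ)
    (K₀ : Set (En n)) (hK₀ : IsCompact K₀)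
    (m₀ : Pn n) (hm₀ : msupp m₀ ⊆ K₀)
    (m : ℝ → ℝ → Pn n) (Φ : ℝ → En n → ℝ → En n)
    (heq : ∀ T : ℝ, 1 < T → IsEquilibrium F K₀ m₀ T (m T) (Φ T))
    (χ' : ℝ)
    (hLip : ∀ T : ℝ, 1 < T → ∀ x ∈ K₀,
      LipschitzOnWith (Real.toNNReal χ') (Φ T x) (Set.Icc 0 T)) :
    ∀ s₀ ∈ Set.Ioc (0:ℝ) 1, ∀ ε : ℝ, 0 < ε → ∃ T₁ : ℝ,
      ∀ T : ℝ, T₁ ≤ T → 1 < T → ∀ s ∈ Set.Icc s₀ 1,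
        (∀ x ∈ msupp (m T (s * T)), Metric.infDist x 𝒜 ≤ ε) ∧
        (∀ x ∈ K₀, Metric.infDist (Φ T x (s * T)) 𝒜 ≤ ε) := by
  intro s₀ hs₀ ε hε
  have hmin : ∀ {b} μ, b ∈ 𝒜 → ∀ z, F b μ ≤ F z μ := fun μ hb => by rwa [← hargmin μ] at hb
  obtain ⟨a, ha⟩ := hA_ne
  obtain ⟨R, hR⟩ := hK₀.isBounded.subset_closedBall a
  obtain ⟨T₁, hT₁⟩ := eventually_atTop.1 <| eventually_infDist_le_of_energy_bound ⟨a, ha⟩ hγ_pos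
    ((abs_nonneg _).trans (hM a m₀)) (R + 1) (Real.toNNReal χ') hs₀.1 hε
  refine ⟨T₁, fun T hT₁T hT s hs => ?_⟩
  obtain ⟨hm, hopt, hpush⟩ := heq T hT
  have htraj : ∀ x ∈ K₀, infDist (Φ T x (s * T)) 𝒜 ≤ ε := by
    intro x hx
    have hx0 : Φ T x 0 = x := (hopt x hx).1.2
    have hφ := hLip T hT x hx
    refine hT₁ T hT₁T (Φ T x) (fun u => F (Φ T x u) (m T u) - F a (m T u)) hφ
      ?start ?integrable (fun u _ => sub_nonneg.2 (hmin _ ha _)) ?coercive ?energy s hs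
    case start =>
      rw [hx0]
      exact (infDist_le_dist_of_mem ha).trans_lt (by linarith [mem_closedBall.1 (hR hx)])
    case integrable =>
      exact (intervalIntegrable_comp_of_separatelyContinuous hM hFx hFm (by linarith)
        hφ.continuousOn hm).sub
        (((hFm a).comp_continuousOn hm).intervalIntegrable_of_Icc (by linarith))
    case coercive =>
      intro u _ r hr hfar
      simpa [cmin_eq_of_forall_le (hmin (m T u) ha)] using hγ r hr _ (m T u) hfar
    case energy =>
      intro t ht τ hτ htτ b hb
      exact integral_sub_le_of_forall_action_le hM hFx hFm hm hφ
        (by rw [hx0]; exact (hopt x hx).2) (fun μ => hmin μ hb a) ht hτ htτ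
  have hsT : s * T ∈ Icc 0 T :=
    ⟨by nlinarith [hs₀.1, hs.1], mul_le_of_le_one_left (by linarith) hs.2⟩
  exact ⟨infDist_le_of_mem_msupp_of_eq_map (hpush (s * T) hsT) hm₀ htraj, htraj⟩

/-- **Asymptotic concentration of the equilibrium measures and flows near `𝒜`.**
Under the standing assumptions (bounded `F` continuous in each variable, a common minimizing
set `𝒜` with `argmin F(·,μ) = 𝒜` for every `μ`, the lower bound `F(z,μ) − c(μ) ≥ γ(r)` for
`dist(z,𝒜) > r`, and equilibria `(m^T, Φ^T)` for `T > 1` with uniformly `χ'`-Lipschitz optimal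
trajectories), for every `s₀ ∈ (0,1]`:
`sup_{s∈[s₀,1]} sup_{x ∈ supp m^T(sT)} dist(x,𝒜) → 0` and
`dist(Φ^T(x,sT),𝒜) → 0` as `T → ∞`, uniformly for `x ∈ K₀` and `s ∈ [s₀,1]`. -/
theorem equilibrium_measures_concentrate {n : ℕ} (F : En n → Pn n → ℝ)
    (M : ℝ) (hM : ∀ (x : En n) (μ : Pn n), |F x μ| ≤ M)
    (hFx : ∀ μ : Pn n, Continuous fun x => F x μ)
    (hFm : ∀ x : En n, Continuous fun μ : Pn n => F x μ)
    (𝒜 : Set (En n)) (hA_ne : 𝒜.Nonempty) (hA_closed : IsClosed 𝒜)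
    (hargmin : ∀ μ : Pn n, {z : En n | ∀ w : En n, F z μ ≤ F w μ} = 𝒜)
    (γ : ℝ → ℝ) (hγ_pos : ∀ r : ℝ, 0 < r → 0 < γ r)
    (hγ : ∀ r : ℝ, 0 < r → ∀ (z : En n) (μ : Pn n),
      r < Metric.infDist z 𝒜 → γ r ≤ F z μ - cmin F μ)
    (K₀ : Set (En n)) (hK₀ : IsCompact K₀)
    (m₀ : Pn n) (hm₀ : msupp m₀ ⊆ K₀)
    (m : ℝ → ℝ → Pn n) (Φ : ℝ → En n → ℝ → En n)
    (heq : ∀ T : ℝ, 1 < T → IsEquilibrium F K₀ m₀ T (m T) (Φ T))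
    (χ' : ℝ) (hχ' : 0 < χ')
    (hLip : ∀ T : ℝ, 1 < T → ∀ x ∈ K₀,
      LipschitzOnWith (Real.toNNReal χ') (Φ T x) (Set.Icc 0 T)) :
    ∀ s₀ ∈ Set.Ioc (0:ℝ) 1, ∀ ε : ℝ, 0 < ε → ∃ T₁ : ℝ,
      ∀ T : ℝ, T₁ ≤ T → 1 < T → ∀ s ∈ Set.Icc s₀ 1,
        (∀ x ∈ msupp (m T (s * T)), Metric.infDist x 𝒜 ≤ ε) ∧
        (∀ x ∈ K₀, Metric.infDist (Φ T x (s * T)) 𝒜 ≤ ε) :=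
  equilibrium_measures_concentrate_general F M hM hFx hFm 𝒜 hA_ne hargmin γ hγ_pos hγ K₀ hK₀ m₀ hm₀
    m Φ heq χ' hLip
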